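/- arXiv:1806.07253 — 10 statements merged into one kernel-verified Lean document; each statement's English description precedes it below -/
import Mathlib

section
/- Sion's minimax theorem: Let X and Y be nonempty convex compact subsets of two real topological vector spaces, and let f : X × Y → ℝ be continuous, quasi-concave in the first variable for each fixed y ∈ Y (i.e. for every y and c the set {x ∈ X : f(x,y) ≥ c} is convex) and quasi-convex in the second variable for each fixed x ∈ X (i.e. for every x and c the set {y ∈ Y : f(x,y) ≤ c} is convex). Then max_{x∈X} min_{y∈Y} f(x,y) = min_{y∈Y} max_{x∈X} f(x,y), where all the indicated maxima and minima are attained. -/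
/-!
Komiya's elementary proof of Sion's theorem, available in Mathlib as
`Sion.exists_isSaddlePointOn`, yields a saddle point `(a, b)` of `f` on `X × Y`, i.e.
`f x b ≤ f a b ≤ f a y` for all `x ∈ X`, `y ∈ Y`. At a saddle point the value `f a b` is both the
largest of the attained inner minima and the smallest of the attained inner maxima; the inner
extrema themselves are attained by compactness and continuity.
-/

open Set

section SaddlePoint

variable {E F β : Type*} [Preorder β] {X : Set E} {Y : Set F} {f : E → F → β} {a : E} {b : F}

lemma isGreatest_value_of_saddle (ha : a ∈ X) (hb : b ∈ Y)
    (hsaddle : ∀ x ∈ X, ∀ y ∈ Y, f x b ≤ f a y) :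
    IsGreatest {m | ∃ x ∈ X, IsLeast (f x '' Y) m} (f a b) := by
  refine ⟨⟨a, ha, ⟨b, hb, rfl⟩, ?_⟩, ?_⟩
  · rintro _ ⟨y, hy, rfl⟩
    exact hsaddle a ha y hy
  · rintro m ⟨x, hx, hm⟩
    exact (hm.2 ⟨b, hb, rfl⟩).trans (hsaddle x hx b hb)

lemma isLeast_value_of_saddle (ha : a ∈ X) (hb : b ∈ Y)
    (hsaddle : ∀ x ∈ X, ∀ y ∈ Y, f x b ≤ f a y) :
    IsLeast {M | ∃ y ∈ Y, IsGreatest ((fun x => f x y) '' X) M} (f a b) := by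
  refine ⟨⟨b, hb, ⟨a, ha, rfl⟩, ?_⟩, ?_⟩
  · rintro _ ⟨x, hx, rfl⟩
    exact hsaddle x hx b hb
  · rintro M ⟨y, hy, hM⟩
    exact (hsaddle a ha y hy).trans (hM.2 ⟨a, ha, rfl⟩)

end SaddlePoint

/-- **Sion's minimax theorem.** Let `X` and `Y` be nonempty convex compact subsets of two
real topological vector spaces, and let `f` be continuous on `X ×ˢ Y`, quasi-concave in the
first variable and quasi-convex in the second variable. Then all the inner minima/maxima are
attained, and `max_{x∈X} min_{y∈Y} f x y = min_{y∈Y} max_{x∈X} f x y`, both outer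
extrema being attained as well. -/
theorem sion_minimax
    {E F : Type*} [AddCommGroup E] [Module ℝ E] [TopologicalSpace E]
    [IsTopologicalAddGroup E] [ContinuousSMul ℝ E]
    [AddCommGroup F] [Module ℝ F] [TopologicalSpace F]
    [IsTopologicalAddGroup F] [ContinuousSMul ℝ F]
    (X : Set E) (Y : Set F)
    (hXne : X.Nonempty) (hYne : Y.Nonempty)
    (hXconv : Convex ℝ X) (hYconv : Convex ℝ Y)
    (hXcomp : IsCompact X) (hYcomp : IsCompact Y)
    (f : E → F → ℝ)
    (hf : ContinuousOn (fun p : E × F => f p.1 p.2) (X ×ˢ Y))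
    (hqc : ∀ y ∈ Y, ∀ c : ℝ, Convex ℝ {x ∈ X | c ≤ f x y})
    (hqv : ∀ x ∈ X, ∀ c : ℝ, Convex ℝ {y ∈ Y | f x y ≤ c}) :
    (∀ x ∈ X, ∃ m : ℝ, IsLeast (f x '' Y) m) ∧
    (∀ y ∈ Y, ∃ M : ℝ, IsGreatest ((fun x => f x y) '' X) M) ∧
    ∃ v : ℝ,
      IsGreatest {m : ℝ | ∃ x ∈ X, IsLeast (f x '' Y) m} v ∧
      IsLeast {M : ℝ | ∃ y ∈ Y, IsGreatest ((fun x => f x y) '' X) M} v := by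
  have hfx : ∀ x ∈ X, ContinuousOn (f x) Y := fun x hx => hf.uncurry_left x hx
  have hfy : ∀ y ∈ Y, ContinuousOn (fun x => f x y) X := fun y hy => hf.uncurry_right y hy
  -- Mathlib's minimizing variable is our `y`, its maximizing variable our `x`.
  obtain ⟨b, hb, a, ha, hsaddle⟩ := Sion.exists_isSaddlePointOn (f := fun y x => f x y)
    hYne hYconv hYcomp (fun x hx => (hfx x hx).lowerSemicontinuousOn) hqv
    hXconv hXne hXcomp (fun y hy => (hfy y hy).upperSemicontinuousOn) hqc
  have hsaddle' : ∀ x ∈ X, ∀ y ∈ Y, f x b ≤ f a y := fun x hx y hy => hsaddle y hy x hx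
  refine ⟨fun x hx => (hYcomp.image_of_continuousOn (hfx x hx)).exists_isLeast (hYne.image _),
    fun y hy => (hXcomp.image_of_continuousOn (hfy y hy)).exists_isGreatest (hXne.image _),
    f a b, isGreatest_value_of_saddle ha hb hsaddle', isLeast_value_of_saddle ha hb hsaddle'⟩
end

section
/- (Theorem 1) Let S and T be nonempty compact topological spaces, n ≥ 3, and let u_1, …, u_n : S^{n−1} × T → ℝ be continuous functions satisfying the zero-sum condition Σ_{i=1}^{n} u_i(x, t) = 0 for all (x, t) ∈ S^{n−1} × T. Assume symmetry of group 1 at constant profiles: u_i(const(s), t) = u_j(const(s), t) for all s ∈ S, t ∈ T, and all i, j ≤ n−1. Suppose (const(s*), t*) is a Nash equilibrium which is symmetric in group 1, i.e. for each i ≤ n−1, u_i(const(s*), t*) ≥ u_i(const(s*)[i := s], t*) for all s ∈ S, and u_n(const(s*), t*) ≥ u_n(const(s*), t) for all t ∈ T. Then for each i ≤ n−1, defining φ_i(s, t) := u_i(const(s*)[i := s], t), one has max_{s∈S} min_{t∈T} φ_i(s, t) = min_{t∈T} max_{s∈S} φ_i(s, t) = u_i(const(s*), t*); moreover s* attains the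 maximum of s ↦ min_{t∈T} φ_i(s, t) over S, and t* attains the minimum of t ↦ max_{s∈S} φ_i(s, t) over T. -/
/-- **Theorem 1.** In an `n`-player zero-sum game (`n ≥ 3`) where players `1, …, n-1`
(group 1) share the compact strategy space `S` and player `n` has compact strategy space `T`,
with continuous payoffs that are symmetric in group 1 at constant profiles, the existence of
a Nash equilibrium `(const s*, t*)` which is symmetric in group 1 implies Sion's minimax
equality for `φ_i (s, t) = u i (const s* [i := s]) t`: both iterated extrema equal the
equilibrium payoff `u i (const s*) t*`, `s*` attains the maximum of `s ↦ min_t φ_i (s, t)`,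
and `t*` attains the minimum of `t ↦ max_s φ_i (s, t)`. -/
theorem nash_implies_sion
    {S T : Type*} [TopologicalSpace S] [TopologicalSpace T]
    [CompactSpace S] [CompactSpace T] [Nonempty S] [Nonempty T]
    (n : ℕ) (hn : 3 ≤ n)
    (u : Fin (n - 1) → (Fin (n - 1) → S) → T → ℝ)      -- payoffs of group-1 players
    (un : (Fin (n - 1) → S) → T → ℝ)                    -- payoff of player n
    (hu : ∀ i : Fin (n - 1), Continuous (fun p : (Fin (n - 1) → S) × T => u i p.1 p.2))
    (hun : Continuous (fun p : (Fin (n - 1) → S) × T => un p.1 p.2))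
    (hzero : ∀ (x : Fin (n - 1) → S) (t : T), (∑ i : Fin (n - 1), u i x t) + un x t = 0)
    (hsym : ∀ (s : S) (t : T) (i j : Fin (n - 1)),
      u i (fun _ => s) t = u j (fun _ => s) t)
    (ss : S) (ts : T)
    -- `(const ss, ts)` is a Nash equilibrium, symmetric in group 1:
    (hNash1 : ∀ (i : Fin (n - 1)) (s : S),
      u i (Function.update (fun _ => ss) i s) ts ≤ u i (fun _ => ss) ts)
    (hNashn : ∀ t : T, un (fun _ => ss) t ≤ un (fun _ => ss) ts) :
    ∀ i : Fin (n - 1),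
      -- `max_s min_t φ_i (s, t) = u i (const ss) ts`
      IsGreatest {v : ℝ | ∃ s : S,
          IsLeast (Set.range fun t => u i (Function.update (fun _ => ss) i s) t) v}
        (u i (fun _ => ss) ts) ∧
      -- `min_t max_s φ_i (s, t) = u i (const ss) ts`
      IsLeast {v : ℝ | ∃ t : T,
          IsGreatest (Set.range fun s => u i (Function.update (fun _ => ss) i s) t) v}
        (u i (fun _ => ss) ts) ∧
      -- `ss` attains the maximum of `s ↦ min_t φ_i (s, t)`
      IsLeast (Set.range fun t => u i (Function.update (fun _ => ss) i ss) t)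
        (u i (fun _ => ss) ts) ∧
      -- `ts` attains the minimum of `t ↦ max_s φ_i (s, t)`
      IsGreatest (Set.range fun s => u i (Function.update (fun _ => ss) i s) ts)
        (u i (fun _ => ss) ts) := by

  intro i
  have hupd : Function.update (fun _ : Fin (n-1) => ss) i ss = (fun _ => ss) :=
    Function.update_eq_self i _
  -- key: for all t, u i (const ss) ts ≤ u i (const ss) t
  have key : ∀ t : T, u i (fun _ => ss) ts ≤ u i (fun _ => ss) t := by
    intro t
    have hc : ∀ t' : T, (∑ j : Fin (n-1), u j (fun _ => ss) t')
        = (n - 1 : ℕ) * u i (fun _ => ss) t' := by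
      intro t'
      rw [Finset.sum_congr rfl (fun j _ => hsym ss t' j i)]
      simp [Finset.sum_const, Finset.card_univ, mul_comm]
    have h1 : (n - 1 : ℕ) * u i (fun _ => ss) ts ≤ (n - 1 : ℕ) * u i (fun _ => ss) t := by
      rw [← hc, ← hc]
      have e1 := hzero (fun _ => ss) ts
      have e2 := hzero (fun _ => ss) t
      have := hNashn t
      linarith
    have hpos : (0 : ℝ) < (n - 1 : ℕ) := by
      have : 2 ≤ n - 1 := by omega
      exact_mod_cast Nat.lt_of_lt_of_le (by norm_num) this
    exact le_of_mul_le_mul_left h1 hpos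
  have hC : IsLeast (Set.range fun t => u i (Function.update (fun _ => ss) i ss) t)
      (u i (fun _ => ss) ts) := by
    rw [hupd]
    exact ⟨⟨ts, rfl⟩, by rintro x ⟨t, rfl⟩; exact key t⟩
  have hD : IsGreatest (Set.range fun s => u i (Function.update (fun _ => ss) i s) ts)
      (u i (fun _ => ss) ts) := by
    refine ⟨⟨ss, by simp only [hupd]⟩, ?_⟩
    rintro x ⟨s, rfl⟩; exact hNash1 i s
  refine ⟨⟨⟨ss, hC⟩, ?_⟩, ⟨⟨ts, hD⟩, ?_⟩, hC, hD⟩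
  · rintro w ⟨s, hw⟩
    exact le_trans (hw.2 ⟨ts, rfl⟩) (hNash1 i s)
  · rintro w ⟨t, hw⟩
    have h1 : u i (Function.update (fun _ => ss) i ss) t ≤ w := hw.2 ⟨ss, rfl⟩
    rw [hupd] at h1
    exact le_trans (key t) h1
end

section
/- (Theorem 2) Let S and T be nonempty compact topological spaces, n ≥ 3, and let u_1, …, u_n : S^{n−1} × T → ℝ be continuous functions satisfying the zero-sum condition Σ_{i=1}^{n} u_i(x, t) = 0 for all (x, t). Assume full group-1 symmetry: for each i ≤ n−1 and all (x, t), u_i(x, t) = u_1(x ∘ τ_{1i}, t), where τ_{1i} is the transposition exchanging coordinates 1 and i of the group-1 profile. Define φ(s, t) := u_1(const(s̃)[1 := s], t). Suppose s̃ ∈ S satisfies: (i) s̃ attains the maximum over S of s ↦ min_{t∈T} φ(s, t), and (ii) Sion's equality max_{s∈S} min_{t∈T} φ(s, t) = min_{t∈T} max_{s∈S} φ(s, t) holds. Then for any ŝ_n ∈ T attaining the minimum of t ↦ max_{s∈S} φ(s, t), the profile (const(s̃), ŝ_n) is a Nash equilibrium which is symmetric in group 1: for each i ≤ n−1, u_i(const(s̃),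 ŝ_n) ≥ u_i(const(s̃)[i := s], ŝ_n) for all s ∈ S, and u_n(const(s̃), ŝ_n) ≥ u_n(const(s̃), t) for all t ∈ T. -/
/-- **Theorem 2.** In an `n`-player zero-sum game (`n ≥ 3`) where group 1 (players
`1, …, n-1`, here indexed by `Fin (n-1)` with player 1 as index `0`) shares the compact
strategy space `S` and player `n` has compact strategy space `T`, with continuous payoffs
and full group-1 symmetry `u i x t = u 1 (x ∘ swap 1 i) t`, Sion's minimax equality for
`φ (s, t) = u 1 (const s̃ [1 := s]) t` at a point `s̃` attaining `max_s min_t φ` implies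
that for any `ŝ_n` attaining `min_t max_s φ`, the profile `(const s̃, ŝ_n)` is a Nash
equilibrium which is symmetric in group 1. -/
theorem sion_implies_nash
    {S T : Type*} [TopologicalSpace S] [TopologicalSpace T]
    [CompactSpace S] [CompactSpace T] [Nonempty S] [Nonempty T]
    (n : ℕ) (hn : 3 ≤ n)
    (u : Fin (n - 1) → (Fin (n - 1) → S) → T → ℝ)      -- payoffs of group-1 players
    (un : (Fin (n - 1) → S) → T → ℝ)                    -- payoff of player n
    (hu : ∀ i : Fin (n - 1), Continuous (fun p : (Fin (n - 1) → S) × T => u i p.1 p.2))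
    (hun : Continuous (fun p : (Fin (n - 1) → S) × T => un p.1 p.2))
    (hzero : ∀ (x : Fin (n - 1) → S) (t : T), (∑ i : Fin (n - 1), u i x t) + un x t = 0)
    -- full group-1 symmetry: `u i x t = u 1 (x ∘ τ_{1i}) t`
    (hsym : ∀ (i : Fin (n - 1)) (x : Fin (n - 1) → S) (t : T),
      u i x t = u ⟨0, by omega⟩ (x ∘ Equiv.swap (⟨0, by omega⟩ : Fin (n - 1)) i) t)
    (st : S) (v : ℝ)
    -- (i) `st` attains the maximum over `S` of `s ↦ min_t φ (s, t)`, with value `v`: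
    (hmaxmin :
      IsLeast (Set.range fun t =>
        u ⟨0, by omega⟩ (Function.update (fun _ => st) ⟨0, by omega⟩ st) t) v ∧
      ∀ (s : S) (w : ℝ),
        IsLeast (Set.range fun t =>
          u ⟨0, by omega⟩ (Function.update (fun _ => st) ⟨0, by omega⟩ s) t) w → w ≤ v)
    -- (ii) Sion's equality: `min_t max_s φ (s, t)` is attained and also equals `v`:
    (hsion :
      IsLeast {w : ℝ | ∃ t : T,
        IsGreatest (Set.range fun s =>
          u ⟨0, by omega⟩ (Function.update (fun _ => st) ⟨0, by omega⟩ s) t) w} v) :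
    -- then any `tn` attaining `min_t max_s φ (s, t)` gives a Nash equilibrium
    -- `(const st, tn)` which is symmetric in group 1:
    ∀ tn : T,
      IsGreatest (Set.range fun s =>
        u ⟨0, by omega⟩ (Function.update (fun _ => st) ⟨0, by omega⟩ s) tn) v →
      (∀ (i : Fin (n - 1)) (s : S),
        u i (Function.update (fun _ => st) i s) tn ≤ u i (fun _ => st) tn) ∧
      (∀ t : T, un (fun _ => st) t ≤ un (fun _ => st) tn) := by

  intro tn hgtn
  set z : Fin (n - 1) := ⟨0, by omega⟩ with hz
  have hconst : Function.update (fun _ => st) z st = (fun _ : Fin (n-1) => st) := by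
    funext j; simp [Function.update]
  -- φ(st, t) ≥ v for all t
  have hlow : ∀ t : T, v ≤ u z (fun _ => st) t := by
    intro t
    have := hmaxmin.1.2 (Set.mem_range_self t)
    rwa [hconst] at this
  -- φ(s, tn) ≤ v for all s
  have hup : ∀ s : S, u z (Function.update (fun _ => st) z s) tn ≤ v := by
    intro s
    exact hgtn.2 (Set.mem_range_self s)
  have hvtn : u z (fun _ => st) tn = v := by
    have h1 := hup st
    rw [hconst] at h1
    exact le_antisymm h1 (hlow tn)
  -- key rewriting: (const st)[i := s] ∘ swap z i = (const st)[z := s]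
  have hswap : ∀ (i : Fin (n-1)) (s : S),
      (Function.update (fun _ => st) i s) ∘ (Equiv.swap z i) =
      Function.update (fun _ => st) z s := by
    intro i s
    funext j
    rcases eq_or_ne j z with rfl | hj
    · simp [Function.comp, Equiv.swap_apply_left, Function.update]
    · have : Equiv.swap z i j ≠ i := fun h =>
        hj ((Equiv.swap z i).injective (h.trans (Equiv.swap_apply_left z i).symm))
      simp [Function.comp, Function.update_of_ne this, Function.update_of_ne hj]
  have hconstswap : ∀ (i : Fin (n-1)), ((fun _ : Fin (n-1) => st) ∘ (Equiv.swap z i))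
      = (fun _ : Fin (n-1) => st) := fun i => rfl
  constructor
  · intro i s
    have h1 : u i (Function.update (fun _ => st) i s) tn
        = u z (Function.update (fun _ => st) z s) tn := by
      rw [hsym i, hswap]
    have h2 : u i (fun _ => st) tn = u z (fun _ => st) tn := by
      rw [hsym i, hconstswap]
    rw [h1, h2, hvtn]
    exact hup s
  · intro t
    have hsumeq : ∀ t' : T, un (fun _ => st) t'
        = -((n - 1 : ℕ) * u z (fun _ => st) t') := by
      intro t'
      have h0 := hzero (fun _ => st) t'
      have hsum : (∑ i : Fin (n-1), u i (fun _ => st) t')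
          = (n - 1 : ℕ) * u z (fun _ => st) t' := by
        rw [Finset.sum_congr rfl (fun i _ => by rw [hsym i, hconstswap])]
        simp [Finset.sum_const, nsmul_eq_mul]
      rw [hsum] at h0
      linarith
    rw [hsumeq t, hsumeq tn, hvtn, neg_le_neg_iff]
    have hn1 : (0:ℝ) ≤ (n - 1 : ℕ) := by positivity
    exact mul_le_mul_of_nonneg_left (hlow t) hn1
end

section
/- The profile (x*_A, x*_B, x*_C, x*_D) with x*_A = (2a − 5c_A + c_B + c_C + c_D)/8, x*_B = (2a − 5c_B + c_A + c_C + c_D)/8, x*_C = (2a − 5c_C + c_A + c_B + c_D)/8, x*_D = (2a − 5c_D + c_A + c_B + c_C)/8 is a Nash equilibrium of the relative profit game: for each firm i ∈ {A, B, C, D} and every y ∈ ℝ, the relative profit π_i evaluated at the profile obtained from (x*_A, x*_B, x*_C, x*_D) by replacing x_i with y is at most π_i(x*_A, x*_B, x*_C, x*_D). -/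
/-- Absolute profit of a firm with output `x`, marginal cost `c`, demand intercept `a`
and total industry output `s`. -/
noncomputable def absProfit (a c x s : ℝ) : ℝ := (a - s) * x - c * x

/-- Relative profit of firm A. -/
noncomputable def piA (a cA cB cC cD xA xB xC xD : ℝ) : ℝ :=
  absProfit a cA xA (xA + xB + xC + xD) -
    (1 / 3) * (absProfit a cB xB (xA + xB + xC + xD) +
      absProfit a cC xC (xA + xB + xC + xD) +
      absProfit a cD xD (xA + xB + xC + xD))

/-- Relative profit of firm B. -/
noncomputable def piB (a cA cB cC cD xA xB xC xD : ℝ) : ℝ :=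
  absProfit a cB xB (xA + xB + xC + xD) -
    (1 / 3) * (absProfit a cA xA (xA + xB + xC + xD) +
      absProfit a cC xC (xA + xB + xC + xD) +
      absProfit a cD xD (xA + xB + xC + xD))

/-- Relative profit of firm C. -/
noncomputable def piC (a cA cB cC cD xA xB xC xD : ℝ) : ℝ :=
  absProfit a cC xC (xA + xB + xC + xD) -
    (1 / 3) * (absProfit a cA xA (xA + xB + xC + xD) +
      absProfit a cB xB (xA + xB + xC + xD) +
      absProfit a cD xD (xA + xB + xC + xD))

/-- Relative profit of firm D. -/
noncomputable def piD (a cA cB cC cD xA xB xC xD : ℝ) : ℝ :=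
  absProfit a cD xD (xA + xB + xC + xD) -
    (1 / 3) * (absProfit a cA xA (xA + xB + xC + xD) +
      absProfit a cB xB (xA + xB + xC + xD) +
      absProfit a cC xC (xA + xB + xC + xD))

/-- The profile `(x*_A, x*_B, x*_C, x*_D)` of Section "Example" is a Nash equilibrium of the
relative profit game: no firm can increase its relative profit by a unilateral deviation. -/
theorem nash_equilibrium_relative_profit (a cA cB cC cD xA xB xC xD : ℝ)
    (hA : xA = (2 * a - 5 * cA + cB + cC + cD) / 8)
    (hB : xB = (2 * a - 5 * cB + cA + cC + cD) / 8)
    (hC : xC = (2 * a - 5 * cC + cA + cB + cD) / 8)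
    (hD : xD = (2 * a - 5 * cD + cA + cB + cC) / 8) :
    (∀ y : ℝ, piA a cA cB cC cD y xB xC xD ≤ piA a cA cB cC cD xA xB xC xD) ∧
    (∀ y : ℝ, piB a cA cB cC cD xA y xC xD ≤ piB a cA cB cC cD xA xB xC xD) ∧
    (∀ y : ℝ, piC a cA cB cC cD xA xB y xD ≤ piC a cA cB cC cD xA xB xC xD) ∧
    (∀ y : ℝ, piD a cA cB cC cD xA xB xC y ≤ piD a cA cB cC cD xA xB xC xD) := by
  subst hA hB hC hD
  refine ⟨?_, ?_, ?_, ?_⟩ <;> intro y <;>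
    simp only [piA, piB, piC, piD, absProfit]
  · nlinarith [sq_nonneg (y - (2 * a - 5 * cA + cB + cC + cD) / 8)]
  · nlinarith [sq_nonneg (y - (2 * a - 5 * cB + cA + cC + cD) / 8)]
  · nlinarith [sq_nonneg (y - (2 * a - 5 * cC + cA + cB + cD) / 8)]
  · nlinarith [sq_nonneg (y - (2 * a - 5 * cD + cA + cB + cC) / 8)]
end

section
/- For all x_B, x_C ∈ ℝ: for each x_A ∈ ℝ the infimum over x_D ∈ ℝ of π_A(x_A, x_B, x_C, x_D) is attained (π_A is a strictly convex quadratic in x_D), and the resulting function m(x_A) := min_{x_D ∈ ℝ} π_A(x_A, x_B, x_C, x_D) attains its maximum over ℝ at the unique point x_A = (2a − 3c_A + c_D)/8. In particular, firm A's maximin strategy against firm D equals (2a − 3c_A + c_D)/8 regardless of the values of x_B and x_C. -/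

private lemma piA_key (a cA cB cC cD xA xB xC xD : ℝ) :
    piA a cA cB cC cD xA xB xC xD =
      piA a cA cB cC cD xA xB xC ((a - cD) / 2 + xA - xB - xC) +
      (1 / 3) * (xD - ((a - cD) / 2 + xA - xB - xC)) ^ 2 := by
  simp only [piA, absProfit]; ring

private lemma piA_isLeast (a cA cB cC cD xA xB xC : ℝ) :
    IsLeast (Set.range fun xD => piA a cA cB cC cD xA xB xC xD)
      (piA a cA cB cC cD xA xB xC ((a - cD) / 2 + xA - xB - xC)) := by
  constructor
  · exact ⟨(a - cD) / 2 + xA - xB - xC, rfl⟩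
  · rintro y ⟨xD, rfl⟩
    simp only []
    rw [piA_key a cA cB cC cD xA xB xC xD]
    nlinarith [sq_nonneg (xD - ((a - cD) / 2 + xA - xB - xC))]

private lemma piA_sInf (a cA cB cC cD xA xB xC : ℝ) :
    sInf (Set.range fun xD => piA a cA cB cC cD xA xB xC xD) =
      piA a cA cB cC cD xA xB xC ((a - cD) / 2 + xA - xB - xC) :=
  (piA_isLeast a cA cB cC cD xA xB xC).csInf_eq

private lemma piA_quad (a cA cB cC cD xA xB xC : ℝ) :
    piA a cA cB cC cD ((2 * a - 3 * cA + cD) / 8) xB xC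
        ((a - cD) / 2 + (2 * a - 3 * cA + cD) / 8 - xB - xC) -
      piA a cA cB cC cD xA xB xC ((a - cD) / 2 + xA - xB - xC) =
      (4 / 3) * (xA - (2 * a - 3 * cA + cD) / 8) ^ 2 := by
  simp only [piA, absProfit]; ring

/-- Firm A's maximin strategy against firm D: for every `x_A` the minimum over `x_D` of
`π_A` is attained, and `x_A ↦ min_{x_D} π_A` attains its maximum over `ℝ` at the unique
point `x_A = (2a - 3c_A + c_D)/8`, whatever `x_B` and `x_C` are. -/
theorem maximin_strategy_firm_A (a cA cB cC cD xB xC : ℝ) :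
    (∀ xA : ℝ,
      IsLeast (Set.range fun xD => piA a cA cB cC cD xA xB xC xD)
        (sInf (Set.range fun xD => piA a cA cB cC cD xA xB xC xD))) ∧
    (∀ xA : ℝ,
      sInf (Set.range fun xD => piA a cA cB cC cD xA xB xC xD) ≤
        sInf (Set.range fun xD =>
          piA a cA cB cC cD ((2 * a - 3 * cA + cD) / 8) xB xC xD)) ∧
    (∀ xA : ℝ,
      sInf (Set.range fun xD => piA a cA cB cC cD xA xB xC xD) =
        sInf (Set.range fun xD =>
          piA a cA cB cC cD ((2 * a - 3 * cA + cD) / 8) xB xC xD) →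
      xA = (2 * a - 3 * cA + cD) / 8) := by
  refine ⟨fun xA => ?_, fun xA => ?_, fun xA h => ?_⟩
  · rw [piA_sInf]; exact piA_isLeast a cA cB cC cD xA xB xC
  · rw [piA_sInf, piA_sInf]
    nlinarith [piA_quad a cA cB cC cD xA xB xC, sq_nonneg (xA - (2 * a - 3 * cA + cD) / 8)]
  · rw [piA_sInf, piA_sInf] at h
    nlinarith [piA_quad a cA cB cC cD xA xB xC, sq_nonneg (xA - (2 * a - 3 * cA + cD) / 8)]
end

section
/- For all x_B, x_C ∈ ℝ: for each x_D ∈ ℝ the supremum over x_A ∈ ℝ of π_A(x_A, x_B, x_C, x_D) is attained (π_A is a strictly concave quadratic in x_A), and the resulting function h(x_D) := max_{x_A ∈ ℝ} π_A(x_A, x_B, x_C, x_D) attains its minimum over ℝ at the unique point x_D = (6a − 3c_A − 3c_D − 8x_B − 8x_C)/8. In particular, firm D's minimax strategy against firm A equals (6a − 3c_A − 3c_D − 8x_B − 8x_C)/8. -/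

lemma piA_le (a cA cB cC cD xB xC xD xA : ℝ) :
    piA a cA cB cC cD xA xB xC xD ≤
      piA a cA cB cC cD ((a - cA - (2/3) * (xB + xC + xD)) / 2) xB xC xD := by
  simp only [piA, absProfit]
  nlinarith [sq_nonneg (xA - (a - cA - (2/3) * (xB + xC + xD)) / 2)]

lemma piA_isGreatest (a cA cB cC cD xB xC xD : ℝ) :
    IsGreatest (Set.range fun xA => piA a cA cB cC cD xA xB xC xD)
      (piA a cA cB cC cD ((a - cA - (2/3) * (xB + xC + xD)) / 2) xB xC xD) := by
  constructor
  · exact Set.mem_range_self _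
  · rintro _ ⟨xA, rfl⟩
    exact piA_le a cA cB cC cD xB xC xD xA

lemma piA_sSup (a cA cB cC cD xB xC xD : ℝ) :
    sSup (Set.range fun xA => piA a cA cB cC cD xA xB xC xD) =
      piA a cA cB cC cD ((a - cA - (2/3) * (xB + xC + xD)) / 2) xB xC xD :=
  (piA_isGreatest a cA cB cC cD xB xC xD).csSup_eq

/-- Firm D's minimax strategy against firm A: for every `x_D` the maximum over `x_A` of
`π_A` is attained, and `x_D ↦ max_{x_A} π_A` attains its minimum over `ℝ` at the unique
point `x_D = (6a - 3c_A - 3c_D - 8x_B - 8x_C)/8`. -/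
theorem minimax_strategy_firm_D_vs_A (a cA cB cC cD xB xC : ℝ) :
    (∀ xD : ℝ,
      IsGreatest (Set.range fun xA => piA a cA cB cC cD xA xB xC xD)
        (sSup (Set.range fun xA => piA a cA cB cC cD xA xB xC xD))) ∧
    (∀ xD : ℝ,
      sSup (Set.range fun xA =>
          piA a cA cB cC cD xA xB xC ((6 * a - 3 * cA - 3 * cD - 8 * xB - 8 * xC) / 8)) ≤
        sSup (Set.range fun xA => piA a cA cB cC cD xA xB xC xD)) ∧
    (∀ xD : ℝ,
      sSup (Set.range fun xA => piA a cA cB cC cD xA xB xC xD) =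
        sSup (Set.range fun xA =>
          piA a cA cB cC cD xA xB xC ((6 * a - 3 * cA - 3 * cD - 8 * xB - 8 * xC) / 8)) →
      xD = (6 * a - 3 * cA - 3 * cD - 8 * xB - 8 * xC) / 8) := by
  refine ⟨fun xD => ?_, fun xD => ?_, fun xD h => ?_⟩
  · rw [piA_sSup]; exact piA_isGreatest a cA cB cC cD xB xC xD
  · rw [piA_sSup, piA_sSup]
    simp only [piA, absProfit]
    nlinarith [sq_nonneg (xD - (6 * a - 3 * cA - 3 * cD - 8 * xB - 8 * xC) / 8)]
  · rw [piA_sSup, piA_sSup] at h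
    simp only [piA, absProfit] at h
    have h2 : (xD - (6 * a - 3 * cA - 3 * cD - 8 * xB - 8 * xC) / 8) ^ 2 = 0 := by nlinarith
    have := pow_eq_zero_iff (n := 2) (by norm_num) |>.mp h2
    linarith
end

section
/- For all x_A, x_C ∈ ℝ, the function x_B ↦ min_{x_D ∈ ℝ} π_B(x_A, x_B, x_C, x_D) (the inner minimum being attained since π_B is a strictly convex quadratic in x_D) attains its maximum over ℝ at the unique point x_B = (2a − 3c_B + c_D)/8; and for all x_A, x_B ∈ ℝ, the function x_C ↦ min_{x_D ∈ ℝ} π_C(x_A, x_B, x_C, x_D) attains its maximum over ℝ at the unique point x_C = (2a − 3c_C + c_D)/8. Thus firms B and C have maximin strategies (2a − 3c_B + c_D)/8 and (2a − 3c_C + c_D)/8 against firm D, regardless of the other group-1 outputs. -/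
lemma piB_least (a cA cB cC cD xA xB xC : ℝ) :
    IsLeast (Set.range fun xD => piB a cA cB cC cD xA xB xC xD)
      (piB a cA cB cC cD xA xB xC ((a - cD + 2*xB - 2*xA - 2*xC)/2)) := by
  constructor
  · exact ⟨_, rfl⟩
  · rintro _ ⟨xD, rfl⟩
    simp only [piB, absProfit]
    nlinarith [sq_nonneg (xD - (a - cD + 2*xB - 2*xA - 2*xC)/2)]

lemma piC_least (a cA cB cC cD xA xB xC : ℝ) :
    IsLeast (Set.range fun xD => piC a cA cB cC cD xA xB xC xD)
      (piC a cA cB cC cD xA xB xC ((a - cD + 2*xC - 2*xA - 2*xB)/2)) := by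
  constructor
  · exact ⟨_, rfl⟩
  · rintro _ ⟨xD, rfl⟩
    simp only [piC, absProfit]
    nlinarith [sq_nonneg (xD - (a - cD + 2*xC - 2*xA - 2*xB)/2)]

/-- Firms B and C have maximin strategies `(2a - 3c_B + c_D)/8` and `(2a - 3c_C + c_D)/8`
against firm D, regardless of the other group-1 outputs: the inner minima over `x_D` are
attained, and the resulting functions attain their maxima at these unique points. -/
theorem maximin_strategies_firms_B_C (a cA cB cC cD : ℝ) :
    (∀ xA xC : ℝ,
      (∀ xB : ℝ,
        IsLeast (Set.range fun xD => piB a cA cB cC cD xA xB xC xD)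
          (sInf (Set.range fun xD => piB a cA cB cC cD xA xB xC xD))) ∧
      (∀ xB : ℝ,
        sInf (Set.range fun xD => piB a cA cB cC cD xA xB xC xD) ≤
          sInf (Set.range fun xD =>
            piB a cA cB cC cD xA ((2 * a - 3 * cB + cD) / 8) xC xD)) ∧
      (∀ xB : ℝ,
        sInf (Set.range fun xD => piB a cA cB cC cD xA xB xC xD) =
          sInf (Set.range fun xD =>
            piB a cA cB cC cD xA ((2 * a - 3 * cB + cD) / 8) xC xD) →
        xB = (2 * a - 3 * cB + cD) / 8)) ∧
    (∀ xA xB : ℝ,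
      (∀ xC : ℝ,
        IsLeast (Set.range fun xD => piC a cA cB cC cD xA xB xC xD)
          (sInf (Set.range fun xD => piC a cA cB cC cD xA xB xC xD))) ∧
      (∀ xC : ℝ,
        sInf (Set.range fun xD => piC a cA cB cC cD xA xB xC xD) ≤
          sInf (Set.range fun xD =>
            piC a cA cB cC cD xA xB ((2 * a - 3 * cC + cD) / 8) xD)) ∧
      (∀ xC : ℝ,
        sInf (Set.range fun xD => piC a cA cB cC cD xA xB xC xD) =
          sInf (Set.range fun xD =>
            piC a cA cB cC cD xA xB ((2 * a - 3 * cC + cD) / 8) xD) →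
        xC = (2 * a - 3 * cC + cD) / 8)) := by
  constructor
  · intro xA xC
    refine ⟨fun xB => ?_, fun xB => ?_, fun xB h => ?_⟩
    · rw [(piB_least a cA cB cC cD xA xB xC).csInf_eq]
      exact piB_least a cA cB cC cD xA xB xC
    · rw [(piB_least a cA cB cC cD xA xB xC).csInf_eq,
        (piB_least a cA cB cC cD xA ((2 * a - 3 * cB + cD) / 8) xC).csInf_eq]
      simp only [piB, absProfit]
      nlinarith [sq_nonneg (xB - (2 * a - 3 * cB + cD) / 8)]
    · rw [(piB_least a cA cB cC cD xA xB xC).csInf_eq,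
        (piB_least a cA cB cC cD xA ((2 * a - 3 * cB + cD) / 8) xC).csInf_eq] at h
      simp only [piB, absProfit] at h
      have h2 : (xB - (2 * a - 3 * cB + cD) / 8) ^ 2 = 0 := by linear_combination (-3/4) * h
      have := pow_eq_zero_iff (n := 2) (by norm_num) |>.mp h2
      linarith
  · intro xA xB
    refine ⟨fun xC => ?_, fun xC => ?_, fun xC h => ?_⟩
    · rw [(piC_least a cA cB cC cD xA xB xC).csInf_eq]
      exact piC_least a cA cB cC cD xA xB xC
    · rw [(piC_least a cA cB cC cD xA xB xC).csInf_eq,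
        (piC_least a cA cB cC cD xA xB ((2 * a - 3 * cC + cD) / 8)).csInf_eq]
      simp only [piC, absProfit]
      nlinarith [sq_nonneg (xC - (2 * a - 3 * cC + cD) / 8)]
    · rw [(piC_least a cA cB cC cD xA xB xC).csInf_eq,
        (piC_least a cA cB cC cD xA xB ((2 * a - 3 * cC + cD) / 8)).csInf_eq] at h
      simp only [piC, absProfit] at h
      have h2 : (xC - (2 * a - 3 * cC + cD) / 8) ^ 2 = 0 := by linear_combination (-3/4) * h
      have := pow_eq_zero_iff (n := 2) (by norm_num) |>.mp h2
      linarith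
end

section
/- Suppose c_A = c_B = c_C = c. Then the common maximin strategy (2a − 3c + c_D)/8 of firms A, B and C equals each of their Nash equilibrium strategies (2a − 5c_i + Σ_{j ≠ i} c_j)/8 for i ∈ {A, B, C}; moreover the profile (x_A, x_B, x_C, x_D) = ((2a − 3c + c_D)/8, (2a − 3c + c_D)/8, (2a − 3c + c_D)/8, (2a − 5c_D + 3c)/8) is a Nash equilibrium of the relative profit game: for each firm i ∈ {A, B, C, D} and every y ∈ ℝ, replacing the i-th coordinate of this profile by y does not increase π_i. -/
/-- When `c_A = c_B = c_C = c`, the common maximin strategy `(2a - 3c + c_D)/8` of firms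
A, B, C equals each of their Nash equilibrium strategies, and the profile in which A, B and C
play `(2a - 3c + c_D)/8` and D plays `(2a - 5c_D + 3c)/8` is a Nash equilibrium of the
relative profit game. -/
theorem symmetric_group_maximin_is_nash (a cA cB cC cD c : ℝ)
    (hA : cA = c) (hB : cB = c) (hC : cC = c)
    (xA xB xC xD : ℝ)
    (hxA : xA = (2 * a - 3 * c + cD) / 8)
    (hxB : xB = (2 * a - 3 * c + cD) / 8)
    (hxC : xC = (2 * a - 3 * c + cD) / 8)
    (hxD : xD = (2 * a - 5 * cD + 3 * c) / 8) :
    -- the common maximin strategy equals each group-1 Nash equilibrium strategy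
    (2 * a - 3 * c + cD) / 8 = (2 * a - 5 * cA + (cB + cC + cD)) / 8 ∧
    (2 * a - 3 * c + cD) / 8 = (2 * a - 5 * cB + (cA + cC + cD)) / 8 ∧
    (2 * a - 3 * c + cD) / 8 = (2 * a - 5 * cC + (cA + cB + cD)) / 8 ∧
    -- the profile is a Nash equilibrium
    ((∀ y : ℝ, piA a cA cB cC cD y xB xC xD ≤ piA a cA cB cC cD xA xB xC xD) ∧
     (∀ y : ℝ, piB a cA cB cC cD xA y xC xD ≤ piB a cA cB cC cD xA xB xC xD) ∧
     (∀ y : ℝ, piC a cA cB cC cD xA xB y xD ≤ piC a cA cB cC cD xA xB xC xD) ∧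
     (∀ y : ℝ, piD a cA cB cC cD xA xB xC y ≤ piD a cA cB cC cD xA xB xC xD)) := by
  subst hA hB hC hxA hxB hxC hxD
  refine ⟨by ring, by ring, by ring, ?_, ?_, ?_, ?_⟩ <;>
    intro y <;> simp only [piA, piB, piC, piD, absProfit] <;>
    nlinarith [sq_nonneg (y - (2 * a - 3 * cC + cD) / 8), sq_nonneg (y - (2 * a - 5 * cD + 3 * cC) / 8)]
end

section
/- Suppose c_A = c_B = c_C = c and set x_B = x_C = (2a − 3c + c_D)/8. Then the function x_D ↦ max_{x_A ∈ ℝ} π_A(x_A, x_B, x_C, x_D) attains its minimum over ℝ at the unique point x_D = (2a − 5c_D + 3c)/8, which equals firm D's Nash equilibrium strategy (2a − 5c_D + c_A + c_B + c_C)/8. -/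
/-- When `c_A = c_B = c_C = c` and `x_B = x_C = (2a - 3c + c_D)/8`, the function
`x_D ↦ max_{x_A} π_A` attains its minimum over `ℝ` at the unique point
`x_D = (2a - 5c_D + 3c)/8`, which equals firm D's Nash equilibrium strategy. -/
theorem minimax_equals_nash_for_D (a cA cB cC cD c : ℝ)
    (hA : cA = c) (hB : cB = c) (hC : cC = c)
    (xB xC : ℝ)
    (hxB : xB = (2 * a - 3 * c + cD) / 8)
    (hxC : xC = (2 * a - 3 * c + cD) / 8) :
    (∀ xD : ℝ,
      IsGreatest (Set.range fun xA => piA a cA cB cC cD xA xB xC xD)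
        (sSup (Set.range fun xA => piA a cA cB cC cD xA xB xC xD))) ∧
    (∀ xD : ℝ,
      sSup (Set.range fun xA =>
          piA a cA cB cC cD xA xB xC ((2 * a - 5 * cD + 3 * c) / 8)) ≤
        sSup (Set.range fun xA => piA a cA cB cC cD xA xB xC xD)) ∧
    (∀ xD : ℝ,
      sSup (Set.range fun xA => piA a cA cB cC cD xA xB xC xD) =
        sSup (Set.range fun xA =>
          piA a cA cB cC cD xA xB xC ((2 * a - 5 * cD + 3 * c) / 8)) →
      xD = (2 * a - 5 * cD + 3 * c) / 8) ∧
    (2 * a - 5 * cD + 3 * c) / 8 = (2 * a - 5 * cD + cA + cB + cC) / 8 := by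
  subst hA hB hC hxB hxC
  set v : ℝ := (2 * a - 5 * cD + 3 * cC) / 8 with hv
  set b : ℝ := (2 * a - 3 * cC + cD) / 8 with hb
  -- the maximizer of xA ↦ piA and the max value
  set m : ℝ → ℝ := fun xD => (a - cC) / 2 - (2 * b + xD) / 3 with hm
  set g : ℝ → ℝ := fun xD => piA a cC cC cC cD (m xD) b b xD with hg
  have hle : ∀ xD xA : ℝ, piA a cC cC cC cD xA b b xD ≤ g xD := by
    intro xD xA
    simp only [hg, hm, piA, absProfit]
    nlinarith [sq_nonneg (xA - ((a - cC) / 2 - (2 * b + xD) / 3))]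
  have hgreat : ∀ xD : ℝ,
      IsGreatest (Set.range fun xA => piA a cC cC cC cD xA b b xD) (g xD) := by
    intro xD
    constructor
    · exact ⟨m xD, rfl⟩
    · rintro y ⟨xA, rfl⟩
      exact hle xD xA
  have hsup : ∀ xD : ℝ,
      sSup (Set.range fun xA => piA a cC cC cC cD xA b b xD) = g xD := by
    intro xD
    exact (hgreat xD).csSup_eq
  have hquad : ∀ xD : ℝ, g xD - g v = 4 / 9 * (xD - v) ^ 2 := by
    intro xD
    simp only [hg, hm, hv, hb, piA, absProfit]
    ring
  refine ⟨fun xD => (hsup xD) ▸ hgreat xD, ?_, ?_, by ring⟩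
  · intro xD
    rw [hsup, hsup]
    nlinarith [hquad xD, sq_nonneg (xD - v)]
  · intro xD h
    rw [hsup, hsup] at h
    have h2 : (xD - v) ^ 2 = 0 := by nlinarith [hquad xD]
    have := pow_eq_zero_iff (n := 2) (by norm_num) |>.mp h2
    linarith [sub_eq_zero.mp this]
end

section
/- Suppose c_B = c_A, c_C = c_D, and c_D ≠ c_A (a game with two 'aliens'). Then firm A's Nash equilibrium strategy is (2a − 5c_A + c_B + c_C + c_D)/8 = (a − 2c_A + c_D)/4, firm A's maximin strategy against firm D is (2a − 3c_A + c_D)/8 (i.e. for all x_B, x_C ∈ ℝ, the function x_A ↦ min_{x_D ∈ ℝ} π_A(x_A, x_B, x_C, x_D) attains its maximum uniquely at x_A = (2a − 3c_A + c_D)/8), and these two values are not equal: (a − 2c_A + c_D)/4 ≠ (2a − 3c_A + c_D)/8. Hence with two aliens the maximin strategy of a firm need not coincide with its Nash equilibrium strategy. -/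
/-- With two aliens (`c_B = c_A`, `c_C = c_D`, `c_D ≠ c_A`), firm A's Nash equilibrium
strategy is `(a - 2c_A + c_D)/4`, its maximin strategy against firm D is
`(2a - 3c_A + c_D)/8`, and these two values differ. -/

theorem two_aliens_maximin_ne_nash (a cA cB cC cD : ℝ)
    (hBA : cB = cA) (hCD : cC = cD) (hDA : cD ≠ cA) :
    -- firm A's Nash equilibrium strategy simplifies
    (2 * a - 5 * cA + cB + cC + cD) / 8 = (a - 2 * cA + cD) / 4 ∧
    -- firm A's maximin strategy against firm D is `(2a - 3c_A + c_D)/8`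
    (∀ xB xC : ℝ,
      (∀ xA : ℝ,
        IsLeast (Set.range fun xD => piA a cA cB cC cD xA xB xC xD)
          (sInf (Set.range fun xD => piA a cA cB cC cD xA xB xC xD))) ∧
      (∀ xA : ℝ,
        sInf (Set.range fun xD => piA a cA cB cC cD xA xB xC xD) ≤
          sInf (Set.range fun xD =>
            piA a cA cB cC cD ((2 * a - 3 * cA + cD) / 8) xB xC xD)) ∧
      (∀ xA : ℝ,
        sInf (Set.range fun xD => piA a cA cB cC cD xA xB xC xD) =
          sInf (Set.range fun xD =>
            piA a cA cB cC cD ((2 * a - 3 * cA + cD) / 8) xB xC xD) →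
        xA = (2 * a - 3 * cA + cD) / 8)) ∧
    -- the two values are not equal
    (a - 2 * cA + cD) / 4 ≠ (2 * a - 3 * cA + cD) / 8 := by
  subst hBA hCD
  -- vertex of piA as a function of xD
  have key : ∀ xA xB xC xD : ℝ,
      piA a cB cB cC cC xA xB xC xD =
        (1/3) * (xD - (xA - xB - xC + (a - cC)/2))^2 +
          piA a cB cB cC cC xA xB xC (xA - xB - xC + (a - cC)/2) := by
    intro xA xB xC xD
    simp only [piA, absProfit]
    ring
  have least : ∀ xA xB xC : ℝ,
      IsLeast (Set.range fun xD => piA a cB cB cC cC xA xB xC xD)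
        (piA a cB cB cC cC xA xB xC (xA - xB - xC + (a - cC)/2)) := by
    intro xA xB xC
    constructor
    · exact ⟨_, rfl⟩
    · rintro y ⟨xD, rfl⟩
      dsimp only
      rw [key xA xB xC xD]
      nlinarith [sq_nonneg (xD - (xA - xB - xC + (a - cC)/2))]
  have hInf : ∀ xA xB xC : ℝ,
      sInf (Set.range fun xD => piA a cB cB cC cC xA xB xC xD) =
        piA a cB cB cC cC xA xB xC (xA - xB - xC + (a - cC)/2) := by
    intro xA xB xC
    exact (least xA xB xC).csInf_eq
  refine ⟨by ring, fun xB xC => ⟨?_, ?_, ?_⟩, ?_⟩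
  · intro xA
    rw [hInf xA xB xC]
    exact least xA xB xC
  · intro xA
    rw [hInf, hInf]
    simp only [piA, absProfit]
    nlinarith [sq_nonneg (xA - (2 * a - 3 * cB + cC) / 8)]
  · intro xA h
    rw [hInf, hInf] at h
    simp only [piA, absProfit] at h
    have h2 : (xA - (2 * a - 3 * cB + cC) / 8)^2 = 0 := by nlinarith
    have := pow_eq_zero_iff (n := 2) (by norm_num) |>.mp h2
    linarith [sub_eq_zero.mp this]
  · intro h
    apply hDA
    linarith
end
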